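/- Consider the data set with N = 2 consumers, K = 4 goods and T = 4 observations in which both consumers have identical expenditure allocations e^{i,1} = (10,1,1,1), e^{i,2} = (1,10,1,1), e^{i,3} = (1,1,10,1), e^{i,4} = (1,1,1,10), and the price indices are p̄^1 = (2,1,1,1), p̄^2 = (1,2,1,1), p̄^3 = (1,1,2,1), p̄^4 = (1,1,1,2). Then there do NOT exist positive prices p^{i,t}_1 > 0 for i = 1,2 and t = 1,…,4 with (p^{1,t}_1 + p^{2,t}_1)/2 = p̄^t_1 for every t, together with strictly increasing, continuous utility functions u^1, u^2: ℝ^4_+ → ℝ, such that for each (i,t), u^i(x(e^{i,t}, p^{i,t})) ≥ u^i(x) for all x ∈ B(p^{i,t}, m^{i,t}), where p^{i,t} = (p^{i,t}_1, p̄^t_2, p̄^t_3, p̄^t_4). That is, this data set cannot be rationalized, even with heterogenous preferences, by price heterogeneity in good 1 alone when prices are aggregated by the arithmetic average. -/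

import Mathlib

open Filter Set MeasureTheory

noncomputable section

/-- The inner product `p·x = ∑ k, p k * x k`. -/
def dotp {K : ℕ} (p x : Fin K → ℝ) : ℝ := ∑ k, p k * x k

/-- The implied bundle `x(e,p) = (e_k / p_k)_k`. -/
def demandOf {K : ℕ} (e p : Fin K → ℝ) : Fin K → ℝ := fun k => e k / p k

/-- The budget set `B(p,m) = {x ∈ ℝ^K_+ : p·x ≤ m}`. -/
def budget {K : ℕ} (p : Fin K → ℝ) (m : ℝ) : Set (Fin K → ℝ) :=
  {x | (∀ k, 0 ≤ x k) ∧ dotp p x ≤ m}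

/-- A utility function on `ℝ^K_+`: continuous and strictly increasing. -/
def IsUtility {K : ℕ} (u : (Fin K → ℝ) → ℝ) : Prop :=
  ContinuousOn u {x | ∀ k, 0 ≤ x k} ∧
  ∀ x y : Fin K → ℝ, (∀ k, 0 ≤ x k) → (∀ k, 0 ≤ y k) →
    (∀ k, x k ≤ y k) → (∃ k, x k < y k) → u x < u y

/-- Basic data-set conditions: expenditures are nonnegative with positive total,
and price indices are strictly positive. -/
def IsDataset {N T K : ℕ} (e : Fin N → Fin T → Fin K → ℝ)
    (pbar : Fin T → Fin K → ℝ) : Prop :=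
  (∀ i t k, 0 ≤ e i t k) ∧ (∀ i t, 0 < ∑ k, e i t k) ∧ (∀ t k, 0 < pbar t k)

/-- The expenditure allocations of the example: both consumers spend 10 on good `t`
and 1 on every other good at observation `t`. -/
def eEx : Fin 2 → Fin 4 → Fin 4 → ℝ := fun _ t k => if t = k then 10 else 1

/-- The price indices of the example: good `t` has price 2 at observation `t`,
all other prices are 1. -/
def pbarEx : Fin 4 → Fin 4 → ℝ := fun t k => if t = k then 2 else 1

/-- Consumer `i`'s full price vector at observation `t`, with idiosyncratic price
`p1 i t` for good 1 and the price indices for all other goods. -/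
def pEx (p1 : Fin 2 → Fin 4 → ℝ) (i : Fin 2) (t : Fin 4) : Fin 4 → ℝ :=
  fun k => if k = 0 then p1 i t else pbarEx t k

/-!
Let `t ≠ s` be observations other than the first. At the prices of `t` the bundle chosen at `s`
costs `p_t / p_s + 8` against a budget of 13, where `p` is the consumer's price of good 1. So if
`p_t ≤ p_s`, the bundle of `s` is strictly affordable at `t`, and the weak axiom of revealed
preference forces the bundle of `t` to be unaffordable at `s`, i.e. `p_s > 5 p_t`. The second
consumer's prices are `2 - p`, ordered the other way round; applying the bound to both consumers
shows that in every pair of observations the first consumer's price is below `2/5` at one and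
above `8/5` at the other. Three observations cannot be split that way.
-/

section RevealedPreference

variable {K : ℕ} {u : (Fin K → ℝ) → ℝ}

lemma dotp_add_single (p y : Fin K → ℝ) (k : Fin K) (ε : ℝ) :
    dotp p (y + Pi.single k ε) = dotp p y + p k * ε := by
  simp [dotp, mul_add, Finset.sum_add_distrib, Pi.single_apply]

lemma demandOf_nonneg {e p : Fin K → ℝ} (he : ∀ k, 0 ≤ e k) (hp : ∀ k, 0 < p k) (k : Fin K) :
    0 ≤ demandOf e p k :=
  div_nonneg (he k) (hp k).le

/-- Spending the slack on a good with positive price gives an affordable, strictly better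
bundle. -/
lemma IsUtility.lt_of_dotp_lt (hu : IsUtility u) {p x y : Fin K → ℝ} {m : ℝ} {k : Fin K}
    (hpk : 0 < p k) (hx : ∀ z ∈ budget p m, u z ≤ u x) (hy : ∀ k, 0 ≤ y k)
    (hym : dotp p y < m) : u y < u x := by
  set ε := (m - dotp p y) / p k
  have hε : 0 < ε := div_pos (sub_pos.2 hym) hpk
  have hcost : dotp p (y + Pi.single k ε) = m := by
    rw [dotp_add_single, mul_div_cancel₀ _ hpk.ne']
    ring
  have hle : ∀ j, y j ≤ (y + Pi.single k ε : Fin K → ℝ) j := fun j => by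
    rcases eq_or_ne j k with rfl | hj <;> simp [*, hε.le]
  calc u y < u (y + Pi.single k ε) :=
        hu.2 y _ hy (fun j => (hy j).trans (hle j)) hle ⟨k, by simpa using hε⟩
    _ ≤ u x := hx _ ⟨fun j => (hy j).trans (hle j), hcost.le⟩

/-- The weak axiom of revealed preference. -/
lemma IsUtility.notMem_budget_of_dotp_lt (hu : IsUtility u) {p q x y : Fin K → ℝ}
    {m n : ℝ} {k : Fin K} (hpk : 0 < p k) (hx : ∀ z ∈ budget p m, u z ≤ u x)
    (hy : ∀ z ∈ budget q n, u z ≤ u y) (hy0 : ∀ k, 0 ≤ y k) (hyp : dotp p y < m) :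
    x ∉ budget q n := fun hxq =>
  (hu.lt_of_dotp_lt hpk hx hy0 hyp).not_ge (hy x hxq)

end RevealedPreference

def RationalizesEx (p1 : Fin 2 → Fin 4 → ℝ) (u : Fin 2 → (Fin 4 → ℝ) → ℝ) : Prop :=
  (∀ i t, 0 < p1 i t) ∧
  (∀ t, (p1 0 t + p1 1 t) / 2 = pbarEx t 0) ∧
  (∀ i, IsUtility (u i)) ∧
  (∀ (i : Fin 2) (t : Fin 4),
    ∀ x ∈ budget (pEx p1 i t) (∑ k, eEx i t k),
      u i x ≤ u i (demandOf (eEx i t) (pEx p1 i t)))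

lemma sum_eEx (i : Fin 2) (t : Fin 4) : ∑ k, eEx i t k = 13 := by
  fin_cases t <;> simp [eEx, Fin.sum_univ_four] <;> norm_num

lemma eEx_nonneg (i : Fin 2) (t k : Fin 4) : 0 ≤ eEx i t k := by
  unfold eEx; split <;> norm_num

lemma pEx_pos {p1 : Fin 2 → Fin 4 → ℝ} {i : Fin 2} {t : Fin 4} (h : 0 < p1 i t) (k : Fin 4) :
    0 < pEx p1 i t k := by
  unfold pEx pbarEx
  split
  · exact h
  · split <;> norm_num

/-- At observation `s ≠ 0` the bundle is `(1 / p1 i s, …)` with 5 units of good `s` and one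
unit of each remaining good; at the prices of `t` it costs `p1 i t / p1 i s + 5 + 2 + 1`. -/
lemma dotp_pEx_demandOf (p1 : Fin 2 → Fin 4 → ℝ) (i : Fin 2) {t s : Fin 4}
    (ht : t ≠ 0) (hs : s ≠ 0) (hts : t ≠ s) (hps : p1 i s ≠ 0) :
    dotp (pEx p1 i t) (demandOf (eEx i s) (pEx p1 i s)) = p1 i t / p1 i s + 8 := by
  fin_cases t <;> fin_cases s <;>
    simp_all [dotp, demandOf, pEx, eEx, pbarEx, Fin.sum_univ_four] <;>
    (rw [div_eq_mul_inv]; ring)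

namespace RationalizesEx

variable {p1 : Fin 2 → Fin 4 → ℝ} {u : Fin 2 → (Fin 4 → ℝ) → ℝ}

lemma sum_eq_two (h : RationalizesEx p1 u) {t : Fin 4} (ht : t ≠ 0) : p1 0 t + p1 1 t = 2 := by
  have := h.2.1 t
  rw [pbarEx, if_neg ht] at this
  linarith

lemma five_mul_lt_of_le (h : RationalizesEx p1 u) (i : Fin 2) {t s : Fin 4} (ht : t ≠ 0)
    (hs : s ≠ 0) (hts : t ≠ s) (hle : p1 i t ≤ p1 i s) : 5 * p1 i t < p1 i s := by
  obtain ⟨hp, -, hu, hopt⟩ := h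
  have hpt := hp i t
  have hps := hp i s
  have hcheap : dotp (pEx p1 i t) (demandOf (eEx i s) (pEx p1 i s)) < ∑ k, eEx i t k := by
    rw [dotp_pEx_demandOf p1 i ht hs hts hps.ne', sum_eEx]
    linarith [(div_le_one hps).2 hle]
  have hdear := (hu i).notMem_budget_of_dotp_lt (pEx_pos hpt 0) (hopt i t) (hopt i s)
    (demandOf_nonneg (eEx_nonneg i s) (pEx_pos hps)) hcheap
  by_contra! hfive
  refine hdear ⟨demandOf_nonneg (eEx_nonneg i t) (pEx_pos hpt), ?_⟩
  rw [dotp_pEx_demandOf p1 i hs ht hts.symm hpt.ne', sum_eEx]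
  linarith [(div_le_iff₀ hpt).2 hfive]

lemma lt_and_lt_of_le (h : RationalizesEx p1 u) {t s : Fin 4} (ht : t ≠ 0) (hs : s ≠ 0)
    (hts : t ≠ s) (hle : p1 0 t ≤ p1 0 s) : p1 0 t < 2 / 5 ∧ 8 / 5 < p1 0 s := by
  have hsum_t := h.sum_eq_two ht
  have hsum_s := h.sum_eq_two hs
  have h0 := h.five_mul_lt_of_le 0 ht hs hts hle
  have h1 := h.five_mul_lt_of_le 1 hs ht hts.symm (by linarith)
  have := h.1 1 s
  have := h.1 0 t
  constructor <;> linarith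

lemma lt_iff_not_lt (h : RationalizesEx p1 u) {t s : Fin 4} (ht : t ≠ 0) (hs : s ≠ 0)
    (hts : t ≠ s) : p1 0 t < 2 / 5 ↔ ¬ p1 0 s < 2 / 5 := by
  rcases le_total (p1 0 t) (p1 0 s) with hle | hle
  · obtain ⟨hlow, hhigh⟩ := h.lt_and_lt_of_le ht hs hts hle
    exact iff_of_true hlow (by linarith)
  · obtain ⟨hlow, hhigh⟩ := h.lt_and_lt_of_le hs ht hts.symm hle
    exact iff_of_false (by linarith) (not_not.2 hlow)

end RationalizesEx

/-- the example data set cannot be rationalized, even with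
heterogenous preferences, by price heterogeneity in good 1 alone when the
idiosyncratic prices average (arithmetically) to the observed price indices. -/
theorem example_not_rationalizable_one_good :
    ¬ ∃ (p1 : Fin 2 → Fin 4 → ℝ) (u : Fin 2 → (Fin 4 → ℝ) → ℝ),
        (∀ i t, 0 < p1 i t) ∧
        (∀ t, (p1 0 t + p1 1 t) / 2 = pbarEx t 0) ∧
        (∀ i, IsUtility (u i)) ∧
        (∀ (i : Fin 2) (t : Fin 4),
          ∀ x ∈ budget (pEx p1 i t) (∑ k, eEx i t k),
            u i x ≤ u i (demandOf (eEx i t) (pEx p1 i t))) := by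
  rintro ⟨p1, u, h⟩
  have h12 := RationalizesEx.lt_iff_not_lt h (t := 1) (s := 2) (by decide) (by decide) (by decide)
  have h23 := RationalizesEx.lt_iff_not_lt h (t := 2) (s := 3) (by decide) (by decide) (by decide)
  have h13 := RationalizesEx.lt_iff_not_lt h (t := 1) (s := 3) (by decide) (by decide) (by decide)
  tauto
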